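/- arXiv:1812.00311 — 5 statements merged into one kernel-verified Lean document; each statement's English description precedes it below -/
import Mathlib

section
/- Let Z = {z_1 < z_2 < ... < z_L} be a finite set of L real numbers such that each z_i is δ-jammed (i.e., for each i there exists j ≠ i with |z_i - z_j| ≤ δ). Then there exists a partial matching of Z into disjoint pairs (z_i, z_{i+1}) of consecutive points with |z_i - z_{i+1}| ≤ δ, containing at least ⌊L/3⌋ pairs. -/
private lemma auxMatch (δ : ℝ) :
    ∀ n (l : List ℝ), l.length ≤ n → l.Pairwise (· < ·) →
    (∀ z ∈ l, ∃ y ∈ l, y ≠ z ∧ |z - y| ≤ δ) →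
    ∃ M : Finset (ℝ × ℝ),
      (∀ p ∈ M, p.1 ∈ l ∧ p.2 ∈ l ∧ p.1 < p.2 ∧ p.2 - p.1 ≤ δ ∧
        ∀ z ∈ l, ¬ (p.1 < z ∧ z < p.2)) ∧
      (∀ p ∈ M, ∀ q ∈ M, p ≠ q →
        p.1 ≠ q.1 ∧ p.1 ≠ q.2 ∧ p.2 ≠ q.1 ∧ p.2 ≠ q.2) ∧
      l.length / 3 ≤ M.card := by
  intro n
  induction n with
  | zero =>
    intro l hl _ _
    have : l = [] := List.length_eq_zero_iff.mp (Nat.le_zero.mp hl)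
    subst this
    exact ⟨∅, by simp, by simp, by simp⟩
  | succ n ih =>
    intro l hl hs hjam
    match l with
    | [] => exact ⟨∅, by simp, by simp, by simp⟩
    | [a] => exact ⟨∅, by simp, by simp, by simp⟩
    | a :: b :: rest =>
      rw [List.pairwise_cons] at hs
      obtain ⟨ha, hs⟩ := hs
      rw [List.pairwise_cons] at hs
      obtain ⟨hb, hs⟩ := hs
      have hab : a < b := ha b (by simp)
      have hba : b - a ≤ δ := by
        obtain ⟨y, hy, hya, hyd⟩ := hjam a (by simp)
        have hby : b ≤ y := by
          simp only [List.mem_cons] at hy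
          rcases hy with h | h | h
          · exact absurd h hya
          · exact h.ge
          · exact (hb y h).le
        have := abs_le.mp hyd
        linarith
      match rest with
      | [] =>
        refine ⟨{(a,b)}, ?_, ?_, ?_⟩
        · intro p hp
          simp only [Finset.mem_singleton] at hp
          subst hp
          refine ⟨by simp, by simp, hab, hba, ?_⟩
          rintro z hz ⟨h1, h2⟩
          simp only [List.mem_cons, List.not_mem_nil, or_false] at hz
          rcases hz with h | h <;> subst h <;> linarith
        · intro p hp q hq hpq
          simp only [Finset.mem_singleton] at hp hq
          exact absurd (hp.trans hq.symm) hpq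
        · simp
      | [c] =>
        have hbc : b < c := hb c (by simp)
        refine ⟨{(a,b)}, ?_, ?_, ?_⟩
        · intro p hp
          simp only [Finset.mem_singleton] at hp
          subst hp
          refine ⟨by simp, by simp, hab, hba, ?_⟩
          rintro z hz ⟨h1, h2⟩
          simp only [List.mem_cons, List.not_mem_nil, or_false] at hz
          rcases hz with h | h | h <;> subst h <;> linarith
        · intro p hp q hq hpq
          simp only [Finset.mem_singleton] at hp hq
          exact absurd (hp.trans hq.symm) hpq
        · simp
      | c :: d :: rest =>
        rw [List.pairwise_cons] at hs
        obtain ⟨hc, hs⟩ := hs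
        rw [List.pairwise_cons] at hs
        obtain ⟨hd, hs⟩ := hs
        have hbc : b < c := hb c (by simp)
        have hcd : c < d := hc d (by simp)
        by_cases hdc : d - c ≤ δ
        · -- keep the whole suffix c :: d :: rest
          have hsuff : (c :: d :: rest).Pairwise (· < ·) :=
            List.pairwise_cons.mpr ⟨hc, List.pairwise_cons.mpr ⟨hd, hs⟩⟩
          have hgt : ∀ x ∈ c :: d :: rest, b < x := by
            intro x hx
            rcases List.mem_cons.mp hx with h | hx
            · subst h; exact hbc
            · have := hc x hx; linarith
          have hcases : ∀ z ∈ a :: b :: c :: d :: rest,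
              z = a ∨ z = b ∨ z ∈ c :: d :: rest := by
            intro z hz
            rcases List.mem_cons.mp hz with h | hz
            · exact Or.inl h
            rcases List.mem_cons.mp hz with h | hz
            · exact Or.inr (Or.inl h)
            · exact Or.inr (Or.inr hz)
          have hjam2 : ∀ z ∈ c :: d :: rest,
              ∃ y ∈ c :: d :: rest, y ≠ z ∧ |z - y| ≤ δ := by
            intro x hx
            obtain ⟨y, hyl, hyx, hyd⟩ :=
              hjam x (List.mem_cons_of_mem _ (List.mem_cons_of_mem _ hx))
            rcases hcases y hyl with h | h | h
            · -- y = a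
              subst h
              have hxy : x - y ≤ δ := (abs_le.mp hyd).2
              rcases List.mem_cons.mp hx with h' | h'
              · subst h'
                refine ⟨d, by simp, hcd.ne', ?_⟩
                rw [abs_sub_comm, abs_of_nonneg (by linarith)]
                linarith
              · have hcx : c < x := hc x h'
                refine ⟨c, by simp, hcx.ne, ?_⟩
                rw [abs_of_nonneg (by linarith)]
                linarith
            · -- y = b
              subst h
              have hxy : x - y ≤ δ := (abs_le.mp hyd).2
              rcases List.mem_cons.mp hx with h' | h'
              · subst h'
                refine ⟨d, by simp, hcd.ne', ?_⟩
                rw [abs_sub_comm, abs_of_nonneg (by linarith)]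
                linarith
              · have hcx : c < x := hc x h'
                refine ⟨c, by simp, hcx.ne, ?_⟩
                rw [abs_of_nonneg (by linarith)]
                linarith
            · exact ⟨y, h, hyx, hyd⟩
          obtain ⟨M', hM1, hM2, hM3⟩ := ih (c :: d :: rest)
            (by simp only [List.length_cons] at hl ⊢; omega) hsuff hjam2
          have habM : (a, b) ∉ M' := by
            intro h
            have := hgt (a, b).1 (hM1 _ h).1
            simp only at this
            linarith
          refine ⟨insert (a, b) M', ?_, ?_, ?_⟩
          · intro p hp
            rcases Finset.mem_insert.mp hp with h | h
            · subst h
              refine ⟨by simp, by simp, hab, hba, ?_⟩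
              rintro z hz ⟨h1, h2⟩
              rcases hcases z hz with h | h | h
              · subst h; simp only at h1; linarith
              · subst h; simp only at h2; linarith
              · have := hgt z h; simp only at h2; linarith
            · obtain ⟨h1', h2', h3', h4', h5'⟩ := hM1 p h
              refine ⟨List.mem_cons_of_mem _ (List.mem_cons_of_mem _ h1'),
                List.mem_cons_of_mem _ (List.mem_cons_of_mem _ h2'), h3', h4', ?_⟩
              rintro z hz ⟨hz1, hz2⟩
              have hp1 : b < p.1 := hgt p.1 h1'
              rcases hcases z hz with h' | h' | h'
              · subst h'; linarith
              · subst h'; linarith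
              · exact h5' z h' ⟨hz1, hz2⟩
          · intro p hp q hq hpq
            have key : ∀ r ∈ M', b < r.1 ∧ b < r.2 := by
              intro r hr
              exact ⟨hgt r.1 (hM1 r hr).1, hgt r.2 (hM1 r hr).2.1⟩
            rcases Finset.mem_insert.mp hp with h | hpM <;>
              rcases Finset.mem_insert.mp hq with h' | hqM
            · exact absurd (h.trans h'.symm) hpq
            · subst h
              obtain ⟨k1, k2⟩ := key q hqM
              exact ⟨(show a < q.1 by linarith).ne, (show a < q.2 by linarith).ne,
                (show b < q.1 by linarith).ne, (show b < q.2 by linarith).ne⟩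
            · subst h'
              obtain ⟨k1, k2⟩ := key p hpM
              exact ⟨(show a < p.1 by linarith).ne', (show b < p.1 by linarith).ne',
                (show a < p.2 by linarith).ne', (show b < p.2 by linarith).ne'⟩
            · exact hM2 p hpM q hqM hpq
          · rw [Finset.card_insert_of_notMem habM]
            simp only [List.length_cons] at hM3 ⊢
            omega
        · -- drop c, use suffix d :: rest
          have hsuff : (d :: rest).Pairwise (· < ·) := List.pairwise_cons.mpr ⟨hd, hs⟩
          have hgt : ∀ x ∈ d :: rest, c < x := by
            intro x hx
            rcases List.mem_cons.mp hx with h | hx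
            · subst h; exact hcd
            · have := hd x hx; linarith
          have hcases : ∀ z ∈ a :: b :: c :: d :: rest,
              z = a ∨ z = b ∨ z = c ∨ z ∈ d :: rest := by
            intro z hz
            rcases List.mem_cons.mp hz with h | hz
            · exact Or.inl h
            rcases List.mem_cons.mp hz with h | hz
            · exact Or.inr (Or.inl h)
            rcases List.mem_cons.mp hz with h | hz
            · exact Or.inr (Or.inr (Or.inl h))
            · exact Or.inr (Or.inr (Or.inr hz))
          have hjam2 : ∀ z ∈ d :: rest, ∃ y ∈ d :: rest, y ≠ z ∧ |z - y| ≤ δ := by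
            intro x hx
            obtain ⟨y, hyl, hyx, hyd⟩ :=
              hjam x (List.mem_cons_of_mem _ (List.mem_cons_of_mem _
                (List.mem_cons_of_mem _ hx)))
            have hxy : x - y ≤ δ := (abs_le.mp hyd).2
            have main : y ≤ c → ∃ y ∈ d :: rest, y ≠ x ∧ |x - y| ≤ δ := by
              intro hyc
              rcases List.mem_cons.mp hx with h' | h'
              · subst h'; exact absurd (by linarith) hdc
              · have hdx : d < x := hd x h'
                refine ⟨d, by simp, hdx.ne, ?_⟩
                rw [abs_of_nonneg (by linarith)]
                linarith
            rcases hcases y hyl with h | h | h | h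
            · exact main (by subst h; linarith)
            · exact main (by subst h; linarith)
            · exact main (le_of_eq h)
            · exact ⟨y, h, hyx, hyd⟩
          obtain ⟨M', hM1, hM2, hM3⟩ := ih (d :: rest)
            (by simp only [List.length_cons] at hl ⊢; omega) hsuff hjam2
          have habM : (a, b) ∉ M' := by
            intro h
            have := hgt (a, b).1 (hM1 _ h).1
            simp only at this
            linarith
          refine ⟨insert (a, b) M', ?_, ?_, ?_⟩
          · intro p hp
            rcases Finset.mem_insert.mp hp with h | h
            · subst h
              refine ⟨by simp, by simp, hab, hba, ?_⟩
              rintro z hz ⟨h1, h2⟩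
              rcases hcases z hz with h | h | h | h
              · subst h; simp only at h1; linarith
              · subst h; simp only at h2; linarith
              · subst h; simp only at h2; linarith
              · have := hgt z h; simp only at h2; linarith
            · obtain ⟨h1', h2', h3', h4', h5'⟩ := hM1 p h
              refine ⟨List.mem_cons_of_mem _ (List.mem_cons_of_mem _
                  (List.mem_cons_of_mem _ h1')),
                List.mem_cons_of_mem _ (List.mem_cons_of_mem _
                  (List.mem_cons_of_mem _ h2')), h3', h4', ?_⟩
              rintro z hz ⟨hz1, hz2⟩
              have hp1 : c < p.1 := hgt p.1 h1'
              rcases hcases z hz with h' | h' | h' | h'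
              · subst h'; linarith
              · subst h'; linarith
              · subst h'; linarith
              · exact h5' z h' ⟨hz1, hz2⟩
          · intro p hp q hq hpq
            have key : ∀ r ∈ M', c < r.1 ∧ c < r.2 := by
              intro r hr
              exact ⟨hgt r.1 (hM1 r hr).1, hgt r.2 (hM1 r hr).2.1⟩
            rcases Finset.mem_insert.mp hp with h | hpM <;>
              rcases Finset.mem_insert.mp hq with h' | hqM
            · exact absurd (h.trans h'.symm) hpq
            · subst h
              obtain ⟨k1, k2⟩ := key q hqM
              exact ⟨(show a < q.1 by linarith).ne, (show a < q.2 by linarith).ne,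
                (show b < q.1 by linarith).ne, (show b < q.2 by linarith).ne⟩
            · subst h'
              obtain ⟨k1, k2⟩ := key p hpM
              exact ⟨(show a < p.1 by linarith).ne', (show b < p.1 by linarith).ne',
                (show a < p.2 by linarith).ne', (show b < p.2 by linarith).ne'⟩
            · exact hM2 p hpM q hqM hpq
          · rw [Finset.card_insert_of_notMem habM]
            simp only [List.length_cons] at hM3 ⊢
            omega

/-- Greedy matching of δ-jammed points: if every point of a finite set `Z ⊂ ℝ` is
δ-jammed, there is a partial matching into disjoint pairs of consecutive points at
distance at most δ, with at least `⌊|Z|/3⌋` pairs. -/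
theorem stmt0 (Z : Finset ℝ) (δ : ℝ) (hδ : 0 ≤ δ)
    (hjam : ∀ z ∈ Z, ∃ y ∈ Z, y ≠ z ∧ |z - y| ≤ δ) :
    ∃ M : Finset (ℝ × ℝ),
      (∀ p ∈ M, p.1 ∈ Z ∧ p.2 ∈ Z ∧ p.1 < p.2 ∧ p.2 - p.1 ≤ δ ∧
        ∀ z ∈ Z, ¬ (p.1 < z ∧ z < p.2)) ∧
      (∀ p ∈ M, ∀ q ∈ M, p ≠ q →
        p.1 ≠ q.1 ∧ p.1 ≠ q.2 ∧ p.2 ≠ q.1 ∧ p.2 ≠ q.2) ∧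
      Z.card / 3 ≤ M.card := by
  obtain ⟨M, h1, h2, h3⟩ := auxMatch δ (Z.sort (· ≤ ·)).length (Z.sort (· ≤ ·))
    le_rfl (Z.sortedLT_sort.pairwise)
    (by
      intro z hz
      rw [Finset.mem_sort] at hz
      obtain ⟨y, hy, h⟩ := hjam z hz
      exact ⟨y, (Finset.mem_sort _).mpr hy, h⟩)
  refine ⟨M, ?_, h2, ?_⟩
  · intro p hp
    obtain ⟨m1, m2, m3, m4, m5⟩ := h1 p hp
    exact ⟨(Finset.mem_sort _).mp m1, (Finset.mem_sort _).mp m2, m3, m4,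
      fun z hz => m5 z ((Finset.mem_sort _).mpr hz)⟩
  · rwa [Finset.length_sort] at h3
end

section
/- Let Π be a finite point process (a random finite set of points) on an interval, let L be the number of δ-jammed points of Π, and for n ∈ ℕ let R be the number of ordered 2n-tuples (x_1, y_1, ..., x_n, y_n) of distinct points of Π with |x_i - y_i| ≤ δ for all i ∈ {1,...,n}. Then R ≥ binomial(⌊L/3⌋, n) · n! · 2^n pointwise (for every realization). -/
open scoped Classical

/-- From the jammed set of size `L` we can extract `L/3` pairwise-disjoint pairs of
points of `P`, each pair within distance `δ`. -/
lemma exists_pairs (P : Finset ℝ) (δ : ℝ) :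
    ∃ g : Fin ((P.filter (fun x => ∃ y ∈ P, y ≠ x ∧ |x - y| ≤ δ)).card / 3) → ℝ × ℝ,
      (∀ k, (g k).1 ∈ P ∧ (g k).2 ∈ P ∧ |(g k).1 - (g k).2| ≤ δ) ∧
      Function.Injective (fun p :
          Fin ((P.filter (fun x => ∃ y ∈ P, y ≠ x ∧ |x - y| ≤ δ)).card / 3) × Bool =>
        if p.2 then (g p.1).1 else (g p.1).2) := by
  classical
  set J := P.filter (fun x => ∃ y ∈ P, y ≠ x ∧ |x - y| ≤ δ) with hJ
  set m := J.card / 3 with hm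
  let e := J.orderIsoOfFin rfl
  have hlt : ∀ (k : Fin m) (j : ℕ), j < 3 → 3 * k.val + j < J.card := by
    intro k j hj
    have := k.isLt
    omega
  let i0 : Fin m → Fin J.card := fun k => ⟨3 * k.val, hlt k 0 (by norm_num)⟩
  let i1 : Fin m → Fin J.card := fun k => ⟨3 * k.val + 1, hlt k 1 (by norm_num)⟩
  let i2 : Fin m → Fin J.card := fun k => ⟨3 * k.val + 2, hlt k 2 (by norm_num)⟩
  have hJP : ∀ x ∈ J, x ∈ P := fun x hx => (Finset.mem_filter.mp hx).1
  have hmono : ∀ {a b : Fin J.card}, a ≤ b → (e a : ℝ) ≤ (e b : ℝ) := by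
    intro a b hab
    exact_mod_cast e.monotone hab
  have main : ∀ k : Fin m,
      ¬ |(e (i1 k) : ℝ) - (e (i0 k) : ℝ)| ≤ δ → |(e (i1 k) : ℝ) - (e (i2 k) : ℝ)| ≤ δ := by
    intro k hnot
    have hx1J : ((e (i1 k) : ℝ)) ∈ J := (e (i1 k)).2
    obtain ⟨y, hyP, hyne, hyd⟩ := (Finset.mem_filter.mp hx1J).2
    have hyJ : y ∈ J := by
      refine Finset.mem_filter.mpr ⟨hyP, (e (i1 k) : ℝ), hJP _ hx1J, ?_, ?_⟩
      · exact fun h => hyne h.symm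
      · rwa [abs_sub_comm]
    obtain ⟨j, hj⟩ := e.surjective ⟨y, hyJ⟩
    have hjy : (e j : ℝ) = y := by rw [hj]
    have hjne : j ≠ i1 k := by
      intro h
      apply hyne
      rw [← hjy, h]
    have h01 : (e (i0 k) : ℝ) ≤ (e (i1 k) : ℝ) := hmono (by simp [i0, i1, Fin.le_def])
    have h12 : (e (i1 k) : ℝ) ≤ (e (i2 k) : ℝ) := hmono (by simp [i1, i2, Fin.le_def])
    rcases lt_or_gt_of_ne hjne with h | h
    · exfalso
      apply hnot
      have hji0 : j ≤ i0 k := by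
        have := h
        simp only [Fin.lt_def, i1] at this
        simpa [Fin.le_def, i0] using by omega
      have hy0 : y ≤ (e (i0 k) : ℝ) := hjy ▸ hmono hji0
      rw [abs_sub_le_iff] at hyd ⊢
      constructor <;> linarith [hyd.1, hyd.2]
    · have hji2 : i2 k ≤ j := by
        have := h
        simp only [Fin.lt_def, i1] at this
        simpa [Fin.le_def, i2] using by omega
      have hy2 : (e (i2 k) : ℝ) ≤ y := hjy ▸ hmono hji2
      rw [abs_sub_le_iff] at hyd ⊢
      constructor <;> linarith [hyd.1, hyd.2]
  -- the chosen index for each (k, side)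
  let ι : Fin m × Bool → Fin J.card := fun p =>
    if p.2 then i1 p.1
    else if |(e (i1 p.1) : ℝ) - (e (i0 p.1) : ℝ)| ≤ δ then i0 p.1 else i2 p.1
  refine ⟨fun k => ((e (ι (k, true)) : ℝ), (e (ι (k, false)) : ℝ)), ?_, ?_⟩
  · intro k
    refine ⟨hJP _ (e _).2, hJP _ (e _).2, ?_⟩
    simp only [ι, if_pos, if_neg]
    by_cases h : |(e (i1 k) : ℝ) - (e (i0 k) : ℝ)| ≤ δ
    · simpa [h] using h
    · simpa [h] using main k h
  · intro p q hpq
    simp only at hpq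
    have hval : ∀ p : Fin m × Bool,
        (if p.2 then ((e (ι (p.1, true)) : ℝ), (e (ι (p.1, false)) : ℝ)).1
          else ((e (ι (p.1, true)) : ℝ), (e (ι (p.1, false)) : ℝ)).2) = (e (ι p) : ℝ) := by
      rintro ⟨k, (_|_)⟩ <;> simp
    rw [hval p, hval q] at hpq
    have hι : ι p = ι q := e.injective (Subtype.val_injective hpq)
    have hιval : ∀ r : Fin m × Bool, ((ι r).val = 3 * r.1.val + 1 ∧ r.2 = true) ∨
        ((ι r).val = 3 * r.1.val ∨ (ι r).val = 3 * r.1.val + 2) ∧ r.2 = false := by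
      rintro ⟨k, (_|_)⟩
      · right
        constructor
        · by_cases h : |(e (i1 k) : ℝ) - (e (i0 k) : ℝ)| ≤ δ <;> simp [ι, h, i0, i2]
        · rfl
      · left; constructor; · simp [ι, i1]
        · rfl
    have h1 := hιval p
    have h2 := hιval q
    rw [hι] at h1
    have hk : p.1 = q.1 := by
      apply Fin.ext
      rcases h1 with ⟨h1, _⟩ | ⟨h1 | h1, _⟩ <;> rcases h2 with ⟨h2, _⟩ | ⟨h2 | h2, _⟩ <;> omega
    have hb : p.2 = q.2 := by
      rcases h1 with ⟨h1, e1⟩ | ⟨h1 | h1, e1⟩ <;> rcases h2 with ⟨h2, e2⟩ | ⟨h2 | h2, e2⟩ <;>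
        rw [e1, e2] <;> omega
    exact Prod.ext hk hb

/-- If `L` is the number of δ-jammed points of a finite set `Π ⊂ ℝ` and `R` is the
number of ordered `2n`-tuples `(x₁,y₁,…,xₙ,yₙ)` of pairwise distinct points of `Π`
with `|xᵢ - yᵢ| ≤ δ` for all `i`, then `R ≥ C(⌊L/3⌋, n) · n! · 2ⁿ`. -/
theorem stmt1 (P : Finset ℝ) (δ : ℝ) (n : ℕ) :
    Nat.choose ((P.filter (fun x => ∃ y ∈ P, y ≠ x ∧ |x - y| ≤ δ)).card / 3) n
        * n.factorial * 2 ^ n ≤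
      (Finset.univ.filter (fun f : Fin n → {x // x ∈ P} × {x // x ∈ P} =>
        (∀ i, |((f i).1 : ℝ) - ((f i).2 : ℝ)| ≤ δ) ∧
        Function.Injective (fun p : Fin n × Bool =>
          if p.2 then ((f p.1).1 : ℝ) else ((f p.1).2 : ℝ)))).card := by
  classical
  set m := (P.filter (fun x => ∃ y ∈ P, y ≠ x ∧ |x - y| ≤ δ)).card / 3 with hm
  obtain ⟨g, hg, hginj⟩ := exists_pairs P δ
  -- the big injection
  let F : (Fin n ↪ Fin m) × (Fin n → Bool) → (Fin n → {x // x ∈ P} × {x // x ∈ P}) :=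
    fun Eb i =>
      if Eb.2 i then
        (⟨(g (Eb.1 i)).1, (hg _).1⟩, ⟨(g (Eb.1 i)).2, (hg _).2.1⟩)
      else
        (⟨(g (Eb.1 i)).2, (hg _).2.1⟩, ⟨(g (Eb.1 i)).1, (hg _).1⟩)
  have hF1 : ∀ Eb i, ((F Eb i).1 : ℝ) =
      (fun p : Fin m × Bool => if p.2 then (g p.1).1 else (g p.1).2) (Eb.1 i, Eb.2 i) := by
    intro Eb i
    by_cases h : Eb.2 i <;> simp [F, h]
  have hF2 : ∀ Eb i, ((F Eb i).2 : ℝ) =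
      (fun p : Fin m × Bool => if p.2 then (g p.1).1 else (g p.1).2) (Eb.1 i, !Eb.2 i) := by
    intro Eb i
    by_cases h : Eb.2 i <;> simp [F, h]
  have hmem : ∀ Eb, F Eb ∈ Finset.univ.filter (fun f : Fin n → {x // x ∈ P} × {x // x ∈ P} =>
        (∀ i, |((f i).1 : ℝ) - ((f i).2 : ℝ)| ≤ δ) ∧
        Function.Injective (fun p : Fin n × Bool =>
          if p.2 then ((f p.1).1 : ℝ) else ((f p.1).2 : ℝ))) := by
    intro Eb
    refine Finset.mem_filter.mpr ⟨Finset.mem_univ _, ?_, ?_⟩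
    · intro i
      by_cases h : Eb.2 i
      · simpa [F, h] using (hg (Eb.1 i)).2.2
      · simpa [F, h, abs_sub_comm] using (hg (Eb.1 i)).2.2
    · intro p q hpq
      simp only at hpq
      have heq : (fun r : Fin m × Bool => if r.2 then (g r.1).1 else (g r.1).2)
            (Eb.1 p.1, xor (!p.2) (Eb.2 p.1)) =
          (fun r : Fin m × Bool => if r.2 then (g r.1).1 else (g r.1).2)
            (Eb.1 q.1, xor (!q.2) (Eb.2 q.1)) := by
        rcases p with ⟨ip, (_|_)⟩ <;> rcases q with ⟨iq, (_|_)⟩ <;>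
          simpa [hF1, hF2, Bool.xor] using hpq
      have := hginj heq
      have h1 : Eb.1 p.1 = Eb.1 q.1 := congrArg Prod.fst this
      have h2 : xor (!p.2) (Eb.2 p.1) = xor (!q.2) (Eb.2 q.1) := congrArg Prod.snd this
      have hk : p.1 = q.1 := Eb.1.injective h1
      refine Prod.ext hk ?_
      rw [hk] at h2
      rcases hbq : Eb.2 q.1 with _ | _ <;> rw [hbq] at h2 <;> simpa using h2
  have hFinj : Function.Injective F := by
    intro Eb Eb' h
    have hcomp : ∀ i, (Eb.1 i, Eb.2 i) = (Eb'.1 i, Eb'.2 i) := by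
      intro i
      apply hginj
      have := congrFun h i
      calc (fun p : Fin m × Bool => if p.2 then (g p.1).1 else (g p.1).2) (Eb.1 i, Eb.2 i)
          = ((F Eb i).1 : ℝ) := (hF1 Eb i).symm
        _ = ((F Eb' i).1 : ℝ) := by rw [this]
        _ = _ := hF1 Eb' i
    have hE : Eb.1 = Eb'.1 := by
      ext i
      exact congrArg (fun p => (Prod.fst p).val) (hcomp i)
    have hb : Eb.2 = Eb'.2 := by
      funext i
      exact congrArg Prod.snd (hcomp i)
    exact Prod.ext hE hb
  calc m.choose n * n.factorial * 2 ^ n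
      = Fintype.card ((Fin n ↪ Fin m) × (Fin n → Bool)) := by
        rw [Fintype.card_prod, Fintype.card_embedding_eq]
        simp [Nat.descFactorial_eq_factorial_mul_choose, Nat.mul_comm]
    _ = (Finset.univ : Finset ((Fin n ↪ Fin m) × (Fin n → Bool))).card :=
        Finset.card_univ.symm
    _ ≤ _ := Finset.card_le_card_of_injOn F (fun a _ => hmem a) hFinj.injOn
end

section
/- For every n, m ∈ ℕ, the inequality m^n ≤ 4^n · binomial(⌊m/3⌋, n) · n! + (12n)^n holds. -/
/-- For every `n, m ∈ ℕ`, `m^n ≤ 4^n · C(⌊m/3⌋, n) · n! + (12n)^n`. -/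
theorem stmt2 (n m : ℕ) :
    m ^ n ≤ 4 ^ n * Nat.choose (m / 3) n * n.factorial + (12 * n) ^ n := by
  by_cases h : m ≤ 12 * n
  · exact le_add_left (Nat.pow_le_pow_left h n)
  · push_neg at h
    set k := m / 3 with hk
    have h4n : 4 * n ≤ k := by omega
    have hm : m ≤ 4 * (k + 1 - n) := by omega
    calc m ^ n ≤ (4 * (k + 1 - n)) ^ n := Nat.pow_le_pow_left hm n
      _ = 4 ^ n * (k + 1 - n) ^ n := mul_pow _ _ _
      _ ≤ 4 ^ n * k.descFactorial n := by
          exact Nat.mul_le_mul_left _ (Nat.pow_sub_le_descFactorial k n)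
      _ = 4 ^ n * Nat.choose k n * n.factorial := by
          rw [Nat.descFactorial_eq_factorial_mul_choose]; ring
      _ ≤ _ := Nat.le_add_right _ _
end

section
/- For κ = (3π/2)^{2/3}, any integer i ≥ 1 and real 0 < m ≤ 5i, setting y_m = κ i^{2/3} - m i^{-1/3} and y_{m,+} = max(y_m, 0), one has i - (2/(3π)) y_{m,+}^{3/2} ≥ min(i, m/5). -/
open Real

/-- For `κ = (3π/2)^{2/3}`, `i ≥ 1` and `0 < m ≤ 5i`, setting
`y_m = κ i^{2/3} - m i^{-1/3}` and `y_{m,+} = max(y_m, 0)`, one has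
`i - (2/(3π)) y_{m,+}^{3/2} ≥ min(i, m/5)`. -/
theorem stmt9 (i : ℕ) (hi : 1 ≤ i) (m : ℝ) (hm : 0 < m) (hm5 : m ≤ 5 * i) :
    min (i : ℝ) (m / 5) ≤
      (i : ℝ) - 2 / (3 * π) *
        (max ((3 * π / 2) ^ ((2:ℝ)/3) * (i : ℝ) ^ ((2:ℝ)/3)
          - m * (i : ℝ) ^ (-(1:ℝ)/3)) 0) ^ ((3:ℝ)/2) := by
  have hπ := pi_pos
  have hπ4 := pi_le_four
  have hi1 : (1:ℝ) ≤ (i:ℝ) := by exact_mod_cast hi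
  have hipos : (0:ℝ) < (i:ℝ) := by linarith
  have hc : (0:ℝ) < 3 * π / 2 := by linarith
  set y : ℝ := (3 * π / 2) ^ ((2:ℝ)/3) * (i : ℝ) ^ ((2:ℝ)/3)
      - m * (i : ℝ) ^ (-(1:ℝ)/3) with hy
  have key : 2 / (3 * π) * (max y 0) ^ ((3:ℝ)/2) ≤ (i:ℝ) - m / 5 := by
    rcases le_or_gt y 0 with h0 | h0
    · rw [max_eq_right h0, Real.zero_rpow (by norm_num)]
      rw [mul_zero]
      linarith
    · rw [max_eq_left h0.le]
      -- κ ≤ 5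
      have hκ5 : (3 * π / 2) ^ ((2:ℝ)/3) ≤ 5 := by
        have h8 : (3 * π / 2 : ℝ) ≤ 8 := by linarith
        have := Real.rpow_le_rpow hc.le h8 (by norm_num : (0:ℝ) ≤ (2:ℝ)/3)
        have h84 : (8:ℝ) ^ ((2:ℝ)/3) = 4 := by
          have h8e : (8:ℝ) = 2 ^ (3:ℝ) := by
            rw [show (3:ℝ) = ((3:ℕ):ℝ) by norm_num, Real.rpow_natCast]; norm_num
          rw [h8e, ← Real.rpow_mul (by norm_num : (0:ℝ) ≤ 2),
            show (3:ℝ) * ((2:ℝ)/3) = ((2:ℕ):ℝ) by push_cast; ring, Real.rpow_natCast]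
          norm_num
        linarith [this, h84]
      -- b = κ i^{2/3}
      set b : ℝ := (3 * π / 2) ^ ((2:ℝ)/3) * (i : ℝ) ^ ((2:ℝ)/3) with hb
      have hbpos : 0 < b := mul_pos (Real.rpow_pos_of_pos hc _) (Real.rpow_pos_of_pos hipos _)
      have hyb : y ≤ b := by
        have : 0 < m * (i:ℝ) ^ (-(1:ℝ)/3) := mul_pos hm (Real.rpow_pos_of_pos hipos _)
        simp only [hy]; linarith
      have hsplit : y ^ ((3:ℝ)/2) = y * y ^ ((1:ℝ)/2) := by
        rw [show (3:ℝ)/2 = 1 + (1:ℝ)/2 by norm_num, Real.rpow_add h0, Real.rpow_one]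
      have hsqrt : y ^ ((1:ℝ)/2) ≤ b ^ ((1:ℝ)/2) :=
        Real.rpow_le_rpow h0.le hyb (by norm_num)
      have hbhalf : b ^ ((1:ℝ)/2) = (3 * π / 2) ^ ((1:ℝ)/3) * (i:ℝ) ^ ((1:ℝ)/3) := by
        rw [hb, Real.mul_rpow (Real.rpow_pos_of_pos hc _).le (Real.rpow_pos_of_pos hipos _).le,
          ← Real.rpow_mul hc.le, ← Real.rpow_mul hipos.le]
        norm_num
      have step1 : y ^ ((3:ℝ)/2) ≤ y * ((3 * π / 2) ^ ((1:ℝ)/3) * (i:ℝ) ^ ((1:ℝ)/3)) := by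
        rw [hsplit, ← hbhalf]
        exact mul_le_mul_of_nonneg_left hsqrt h0.le
      have hexp : y * ((3 * π / 2) ^ ((1:ℝ)/3) * (i:ℝ) ^ ((1:ℝ)/3))
          = (3 * π / 2) ^ ((1:ℝ)/3) * ((3 * π / 2) ^ ((2:ℝ)/3) * (i:ℝ) - m) := by
        have h1 : (i:ℝ) ^ ((2:ℝ)/3) * (i:ℝ) ^ ((1:ℝ)/3) = (i:ℝ) := by
          rw [← Real.rpow_add hipos]; norm_num
        have h2 : (i:ℝ) ^ (-(1:ℝ)/3) * (i:ℝ) ^ ((1:ℝ)/3) = 1 := by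
          rw [← Real.rpow_add hipos]; norm_num
        simp only [hy, hb]
        linear_combination ((3 * π / 2) ^ ((2:ℝ)/3) * (3 * π / 2) ^ ((1:ℝ)/3)) * h1
          - (m * (3 * π / 2) ^ ((1:ℝ)/3)) * h2
      have hcc : (3 * π / 2) ^ ((1:ℝ)/3) * (3 * π / 2) ^ ((2:ℝ)/3) = 3 * π / 2 := by
        rw [← Real.rpow_add hc]; norm_num
      have hκpos : (0:ℝ) < (3 * π / 2) ^ ((2:ℝ)/3) := Real.rpow_pos_of_pos hc _
      have hm5κ : m / 5 ≤ m / (3 * π / 2) ^ ((2:ℝ)/3) :=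
        div_le_div_of_nonneg_left hm.le hκpos hκ5
      have final : 2 / (3 * π) * ((3 * π / 2) ^ ((1:ℝ)/3) * ((3 * π / 2) ^ ((2:ℝ)/3) * (i:ℝ) - m))
          = (i:ℝ) - m / (3 * π / 2) ^ ((2:ℝ)/3) := by
        have h13 : (0:ℝ) < (3 * π / 2) ^ ((1:ℝ)/3) := Real.rpow_pos_of_pos hc _
        field_simp
        linear_combination (2 * ((3 * π / 2) ^ ((2:ℝ)/3) * (i:ℝ) - m)) * hcc
      have h2pi : (0:ℝ) < 2 / (3 * π) := by positivity
      calc 2 / (3 * π) * y ^ ((3:ℝ)/2)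
          ≤ 2 / (3 * π) * (y * ((3 * π / 2) ^ ((1:ℝ)/3) * (i:ℝ) ^ ((1:ℝ)/3))) :=
            mul_le_mul_of_nonneg_left step1 h2pi.le
        _ = (i:ℝ) - m / (3 * π / 2) ^ ((2:ℝ)/3) := by rw [hexp, final]
        _ ≤ (i:ℝ) - m / 5 := by linarith
  calc min (i:ℝ) (m / 5) ≤ m / 5 := min_le_right _ _
    _ ≤ (i:ℝ) - 2 / (3 * π) * (max y 0) ^ ((3:ℝ)/2) := by linarith
end

section
/- Let Ai denote the Airy function and define K(x,y) = ∫_0^∞ Ai(x+λ) Ai(y+λ) dλ. Suppose there is a constant c > 0 such that for all x ≥ 1, |Ai(-x)| ≤ c x^{-1/4}, |Ai'(-x)| ≤ c x^{1/4}, |Ai(x)| ≤ c x^{-1/4} e^{-(2/3)x^{3/2}}, |Ai'(x)| ≤ c x^{1/4} e^{-(2/3)x^{3/2}}, and Ai, Ai' are bounded on [-1,1]. Then there is a constant c' > 0 such that for all x, y ∈ ℝ, with m = c' max(-x, -y, 1): |K(x,y)| ≤ m^{1/2}, |∂_x K(x,y)| ≤ m, and |∂_x ∂_y K(x,y)| ≤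 m^{3/2}. -/
open Real MeasureTheory Set

lemma mytail_int (A r : ℝ) :
    IntegrableOn (fun l => Real.exp ((A - l)/3)) (Ioi r) volume := by
  have base := (exp_neg_integrableOn_Ioi r (by norm_num : (0:ℝ) < 1/3)).const_mul (Real.exp (A/3))
  apply (IntegrableOn.congr_fun base ?_ measurableSet_Ioi)
  intro l _
  show Real.exp (A/3) * Real.exp (-(1/3) * l) = Real.exp ((A - l)/3)
  rw [← Real.exp_add]; ring_nf

lemma mytail_val (A r : ℝ) :
    ∫ l in Ioi r, Real.exp ((A - l)/3) = 3 * Real.exp ((A - r)/3) := by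
  have hd : ∀ x ∈ Ici r, HasDerivAt (fun l => -3 * Real.exp ((A - l)/3))
      (Real.exp ((A - x)/3)) x := by
    intro x _
    have h1 : HasDerivAt (fun l : ℝ => (A - l)/3) (-1/3) x := by
      simpa using (((hasDerivAt_id x).const_sub A).div_const 3)
    have h2 := (Real.hasDerivAt_exp ((A - x)/3)).comp x h1
    have h3 := h2.const_mul (-3 : ℝ)
    exact h3.congr_deriv (by ring)
  have htend : Filter.Tendsto (fun l => -3 * Real.exp ((A - l)/3)) Filter.atTop (nhds 0) := by
    have hneg : Filter.Tendsto (fun l : ℝ => A - l) Filter.atTop Filter.atBot := by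
      simpa [sub_eq_add_neg] using Filter.tendsto_atBot_add_const_left Filter.atTop A Filter.tendsto_neg_atTop_atBot
    have h0 : Filter.Tendsto (fun l : ℝ => (A - l)/3) Filter.atTop Filter.atBot :=
      hneg.atBot_div_const (by norm_num)
    have := (Real.tendsto_exp_atBot.comp h0).const_mul (-3 : ℝ)
    simpa using this
  have := integral_Ioi_of_hasDerivAt_of_tendsto' hd (mytail_int A r) htend
  rw [this]; ring

noncomputable def mypsi (s t : ℝ) : ℝ := (max (-t) 1) ^ s * Real.exp (min ((1-t)/3) 0)

lemma mypsi_nonneg (s t : ℝ) : 0 ≤ mypsi s t :=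
  mul_nonneg (Real.rpow_nonneg (le_trans zero_le_one (le_max_right _ _)) _) (Real.exp_pos _).le

lemma mypsi_cont (s : ℝ) : Continuous (mypsi s) := by
  apply Continuous.mul
  · apply Continuous.rpow_const (continuous_neg.max continuous_const)
    intro t; left
    have : (1:ℝ) ≤ max (-t) 1 := le_max_right _ _
    positivity
  · exact Real.continuous_exp.comp ((((continuous_const.sub continuous_id).div_const 3)).min continuous_const)

lemma mypsi_le_one (s t : ℝ) (hs : s ≤ 0) : mypsi s t ≤ 1 := by
  have h1 : (max (-t) 1) ^ s ≤ 1 :=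
    Real.rpow_le_one_of_one_le_of_nonpos (le_max_right _ _) hs
  have h2 : Real.exp (min ((1-t)/3) 0) ≤ 1 :=
    Real.exp_le_one_iff.mpr (min_le_right _ _)
  calc mypsi s t ≤ 1 * 1 := mul_le_mul h1 h2 (Real.exp_pos _).le zero_le_one
  _ = 1 := by ring

lemma mypsi_neg_le_exp (x l : ℝ) : mypsi (-(1/2)) (x + l) ≤ Real.exp (((1-x) - l)/3) := by
  have h1 : (max (-(x+l)) 1) ^ (-(1/2):ℝ) ≤ 1 :=
    Real.rpow_le_one_of_one_le_of_nonpos (le_max_right _ _) (by norm_num)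
  have h2 : Real.exp (min ((1-(x+l))/3) 0) ≤ Real.exp (((1-x) - l)/3) := by
    apply Real.exp_le_exp.mpr
    calc min ((1-(x+l))/3) 0 ≤ (1-(x+l))/3 := min_le_left _ _
    _ = ((1-x) - l)/3 := by ring
  calc mypsi (-(1/2)) (x+l) ≤ 1 * Real.exp (((1-x) - l)/3) :=
        mul_le_mul h1 h2 (Real.exp_pos _).le zero_le_one
  _ = _ := by ring

lemma one_le_rpow' {m e : ℝ} (hm : 1 ≤ m) (he : 0 ≤ e) : 1 ≤ m ^ e := by
  calc (1:ℝ) = 1 ^ e := (Real.one_rpow e).symm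
  _ ≤ m ^ e := Real.rpow_le_rpow zero_le_one hm he

lemma master_tail_int (s x a : ℝ) (hs : s ≤ 0) :
    IntegrableOn (fun l => mypsi s (x + l)) (Ioi a) volume := by
  apply (mytail_int (1-x) a).mono' ((mypsi_cont s).comp (continuous_const.add continuous_id)).aestronglyMeasurable
  filter_upwards with l
  simp only [Function.comp, id]
  rw [Real.norm_eq_abs, abs_of_nonneg (mypsi_nonneg _ _)]
  have h1 : (max (-(x+l)) 1) ^ s ≤ 1 :=
    Real.rpow_le_one_of_one_le_of_nonpos (le_max_right _ _) hs
  have h2 : Real.exp (min ((1-(x+l))/3) 0) ≤ Real.exp (((1-x) - l)/3) := by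
    apply Real.exp_le_exp.mpr
    calc min ((1-(x+l))/3) 0 ≤ (1-(x+l))/3 := min_le_left _ _
    _ = ((1-x) - l)/3 := by ring
  calc mypsi s (x+l) ≤ 1 * Real.exp (((1-x) - l)/3) :=
        mul_le_mul h1 h2 (Real.exp_pos _).le zero_le_one
  _ = _ := by ring

lemma master_mid_int (s x q r : ℝ) (hs : s ≤ 0) :
    IntegrableOn (fun l => mypsi s (x + l)) (Ioc q r) volume := by
  have hconst : IntegrableOn (fun _ : ℝ => (1:ℝ)) (Ioc q r) volume :=
    integrableOn_const measure_Ioc_lt_top.ne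
  apply hconst.mono' ((mypsi_cont s).comp (continuous_const.add continuous_id)).aestronglyMeasurable
  filter_upwards with l
  simp only [Function.comp, id]
  rw [Real.norm_eq_abs, abs_of_nonneg (mypsi_nonneg _ _)]
  exact mypsi_le_one s _ hs

lemma master_neg (x : ℝ) :
    IntegrableOn (fun l => mypsi (-(1/2)) (x+l)) (Ioi 0) volume ∧
    ∫ l in Ioi 0, mypsi (-(1/2)) (x+l) ≤ 11 * (max (-x) 1) ^ ((1:ℝ)/2) := by
  set a : ℝ := max (-x-1) 0 with ha
  have ha0 : 0 ≤ a := le_max_right _ _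
  have hs : (-(1/2):ℝ) ≤ 0 := by norm_num
  have Imid := master_mid_int (-(1/2)) x 0 a hs
  have Itail := master_tail_int (-(1/2)) x a hs
  have hm1 : (1:ℝ) ≤ max (-x) 1 := le_max_right _ _
  have hm12 : (1:ℝ) ≤ (max (-x) 1) ^ ((1:ℝ)/2) := one_le_rpow' hm1 (by norm_num)
  constructor
  · exact (Imid.union Itail).mono_set Ioi_subset_Ioc_union_Ioi
  · rw [← Ioc_union_Ioi_eq_Ioi ha0,
      setIntegral_union (Ioc_disjoint_Ioi le_rfl) measurableSet_Ioi Imid Itail]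
    -- tail bound
    have htail : ∫ l in Ioi a, mypsi (-(1/2)) (x+l) ≤ 9 := by
      have h1 : ∫ l in Ioi a, mypsi (-(1/2)) (x+l) ≤ ∫ l in Ioi a, Real.exp (((1-x) - l)/3) := by
        apply setIntegral_mono Itail (mytail_int (1-x) a)
        intro l; exact mypsi_neg_le_exp x l
      rw [mytail_val] at h1
      have h2 : ((1-x) - a)/3 ≤ 2/3 := by
        have : -x - 1 ≤ a := le_max_left _ _
        linarith
      have h3 : Real.exp (((1-x) - a)/3) ≤ Real.exp (2/3) := Real.exp_le_exp.mpr h2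
      have h4 : Real.exp (2/3) ≤ 3 := by
        calc Real.exp (2/3) ≤ Real.exp 1 := Real.exp_le_exp.mpr (by norm_num)
        _ ≤ 3 := by linarith [Real.exp_one_lt_d9]
      linarith
    -- mid bound
    have hmid : ∫ l in Ioc 0 a, mypsi (-(1/2)) (x+l) ≤ 2 * (max (-x) 1) ^ ((1:ℝ)/2) := by
      rcases le_or_gt (-x) 1 with hx | hx
      · have : a = 0 := by rw [ha]; apply max_eq_right; linarith
        rw [this]
        simp only [Ioc_self, Measure.restrict_empty, integral_zero_measure]
        positivity
      · have haval : a = -x - 1 := by rw [ha]; apply max_eq_left; linarith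
        have hIrpow : IntegrableOn (fun l => (-x - l) ^ (-(1/2):ℝ)) (Ioc 0 a) volume := by
          have hconst : IntegrableOn (fun _ : ℝ => (1:ℝ)) (Ioc 0 a) volume :=
            integrableOn_const measure_Ioc_lt_top.ne
          apply hconst.mono' ?_ ?_
          · exact ((measurable_const.sub measurable_id).pow measurable_const).aestronglyMeasurable
          · filter_upwards [ae_restrict_mem measurableSet_Ioc] with l hl
            have h1 : (1:ℝ) ≤ -x - l := by
              rcases hl with ⟨hl1, hl2⟩; rw [haval] at hl2; linarith
            rw [Real.norm_eq_abs, abs_of_nonneg (Real.rpow_nonneg (by linarith) _)]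
            exact Real.rpow_le_one_of_one_le_of_nonpos h1 (by norm_num)
        have hlemono : ∫ l in Ioc 0 a, mypsi (-(1/2)) (x+l) ≤ ∫ l in Ioc 0 a, (-x - l) ^ (-(1/2):ℝ) := by
          apply setIntegral_mono_on Imid hIrpow measurableSet_Ioc
          intro l hl
          rcases hl with ⟨hl1, hl2⟩
          have h1 : (1:ℝ) ≤ -x - l := by rw [haval] at hl2; linarith
          have hmax : max (-(x+l)) 1 = -x - l := by
            rw [max_eq_left (by linarith)]; ring
          have hmin : min ((1-(x+l))/3) 0 ≤ 0 := min_le_right _ _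
          rw [mypsi, hmax]
          calc (-x - l) ^ (-(1/2):ℝ) * Real.exp (min ((1-(x+l))/3) 0)
              ≤ (-x - l) ^ (-(1/2):ℝ) * 1 := by
                apply mul_le_mul_of_nonneg_left (Real.exp_le_one_iff.mpr hmin)
                  (Real.rpow_nonneg (by linarith) _)
          _ = (-x - l) ^ (-(1/2):ℝ) := by ring
        have hval : ∫ l in Ioc 0 a, (-x - l) ^ (-(1/2):ℝ) = 2 * (-x) ^ ((1:ℝ)/2) - 2 := by
          rw [← intervalIntegral.integral_of_le ha0]
          have := intervalIntegral.integral_comp_sub_left (fun u : ℝ => u ^ (-(1/2):ℝ)) (-x) (a := 0) (b := a)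
          rw [haval] at this ⊢
          norm_num at this ⊢
          rw [this]
          rw [integral_rpow (Or.inl (by norm_num : (-1:ℝ) < -(1/2)))]
          rw [show (-(1/2:ℝ)+1) = 1/2 by norm_num, Real.one_rpow]
          ring
        have hxle : (-x) ^ ((1:ℝ)/2) ≤ (max (-x) 1) ^ ((1:ℝ)/2) :=
          Real.rpow_le_rpow (by linarith) (le_max_left _ _) (by norm_num)
        rw [hval] at hlemono
        linarith
    linarith

lemma master_pos (x : ℝ) :
    IntegrableOn (fun l => mypsi (1/2) (x+l)) (Ioi 0) volume ∧
    ∫ l in Ioi 0, mypsi (1/2) (x+l) ≤ 11 * (max (-x) 1) ^ ((3:ℝ)/2) := by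
  set m : ℝ := max (-x) 1 with hm
  have hm1 : (1:ℝ) ≤ m := le_max_right _ _
  have hm0 : (0:ℝ) < m := lt_of_lt_of_le zero_lt_one hm1
  set a : ℝ := max (1-x) 0 with ha
  have ha0 : 0 ≤ a := le_max_right _ _
  have ha1 : 1 - x ≤ a := le_max_left _ _
  -- pointwise bounds
  have hpt1 : ∀ l : ℝ, 0 ≤ l → mypsi (1/2) (x+l) ≤ m ^ ((1:ℝ)/2) := by
    intro l hl
    have h1 : (max (-(x+l)) 1) ^ ((1/2):ℝ) ≤ m ^ ((1:ℝ)/2) := by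
      apply Real.rpow_le_rpow (le_trans zero_le_one (le_max_right _ _)) ?_ (by norm_num)
      apply max_le_max_right
      linarith
    have h2 : Real.exp (min ((1-(x+l))/3) 0) ≤ 1 := Real.exp_le_one_iff.mpr (min_le_right _ _)
    calc mypsi (1/2) (x+l) ≤ m ^ ((1:ℝ)/2) * 1 :=
          mul_le_mul h1 h2 (Real.exp_pos _).le (Real.rpow_nonneg hm0.le _)
    _ = _ := by ring
  have hpt2 : ∀ l : ℝ, a ≤ l → mypsi (1/2) (x+l) ≤ Real.exp (((1-x) - l)/3) := by
    intro l hl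
    have hx1 : 1 ≤ x + l := by linarith
    have hmax : max (-(x+l)) 1 = 1 := max_eq_right (by linarith)
    have h2 : Real.exp (min ((1-(x+l))/3) 0) ≤ Real.exp (((1-x) - l)/3) := by
      apply Real.exp_le_exp.mpr
      calc min ((1-(x+l))/3) 0 ≤ (1-(x+l))/3 := min_le_left _ _
      _ = ((1-x) - l)/3 := by ring
    rw [mypsi, hmax, Real.one_rpow, one_mul]
    exact h2
  -- integrability
  have hmeas : AEStronglyMeasurable (fun l => mypsi (1/2) (x + l)) (volume.restrict (Ioi a)) :=
    (((mypsi_cont (1/2)).comp (continuous_const.add continuous_id))).aestronglyMeasurable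
  have Itail : IntegrableOn (fun l => mypsi (1/2) (x+l)) (Ioi a) volume := by
    apply (mytail_int (1-x) a).mono' hmeas
    filter_upwards [ae_restrict_mem measurableSet_Ioi] with l hl
    rw [Real.norm_eq_abs, abs_of_nonneg (mypsi_nonneg _ _)]
    exact hpt2 l (le_of_lt hl)
  have Imid : IntegrableOn (fun l => mypsi (1/2) (x+l)) (Ioc 0 a) volume := by
    have hconst : IntegrableOn (fun _ : ℝ => m ^ ((1:ℝ)/2)) (Ioc 0 a) volume :=
      integrableOn_const measure_Ioc_lt_top.ne
    apply hconst.mono' (((mypsi_cont (1/2)).comp (continuous_const.add continuous_id))).aestronglyMeasurable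
    filter_upwards [ae_restrict_mem measurableSet_Ioc] with l hl
    simp only [Function.comp, id]
    rw [Real.norm_eq_abs, abs_of_nonneg (mypsi_nonneg _ _)]
    exact hpt1 l hl.1.le
  constructor
  · exact (Imid.union Itail).mono_set Ioi_subset_Ioc_union_Ioi
  · rw [← Ioc_union_Ioi_eq_Ioi ha0,
      setIntegral_union (Ioc_disjoint_Ioi le_rfl) measurableSet_Ioi Imid Itail]
    have hm32 : (1:ℝ) ≤ m ^ ((3:ℝ)/2) := one_le_rpow' hm1 (by norm_num)
    have hmid : ∫ l in Ioc 0 a, mypsi (1/2) (x+l) ≤ 2 * m ^ ((3:ℝ)/2) := by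
      have hconst : IntegrableOn (fun _ : ℝ => m ^ ((1:ℝ)/2)) (Ioc 0 a) volume :=
        integrableOn_const measure_Ioc_lt_top.ne
      have h1 : ∫ l in Ioc 0 a, mypsi (1/2) (x+l) ≤ ∫ _ in Ioc 0 a, m ^ ((1:ℝ)/2) := by
        apply setIntegral_mono_on Imid hconst measurableSet_Ioc
        intro l hl; exact hpt1 l hl.1.le
      rw [setIntegral_const, measureReal_def, Real.volume_Ioc, smul_eq_mul] at h1
      have hvol : (ENNReal.ofReal (a - 0)).toReal = a := by
        rw [ENNReal.toReal_ofReal (by linarith)]; ring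
      rw [hvol] at h1
      have haa : a ≤ 2 * m := by
        have h2 : -x ≤ m := le_max_left _ _
        rcases le_or_gt (1-x) 0 with h | h
        · have : a = 0 := max_eq_right h; rw [this]; positivity
        · have : a = 1-x := max_eq_left h.le; rw [this]; linarith
      have hsplit : m ^ ((1:ℝ)/2) * (2 * m) = 2 * m ^ ((3:ℝ)/2) := by
        rw [show m ^ ((3:ℝ)/2) = m ^ ((1:ℝ)/2 + 1) by norm_num,
          Real.rpow_add hm0, Real.rpow_one]
        ring
      calc ∫ l in Ioc 0 a, mypsi (1/2) (x+l) ≤ a * m ^ ((1:ℝ)/2) := h1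
      _ ≤ (2 * m) * m ^ ((1:ℝ)/2) := by
          apply mul_le_mul_of_nonneg_right haa (Real.rpow_nonneg hm0.le _)
      _ = 2 * m ^ ((3:ℝ)/2) := by rw [← hsplit]; ring
    have htail : ∫ l in Ioi a, mypsi (1/2) (x+l) ≤ 3 := by
      have h1 : ∫ l in Ioi a, mypsi (1/2) (x+l) ≤ ∫ l in Ioi a, Real.exp (((1-x) - l)/3) := by
        apply setIntegral_mono_on Itail (mytail_int (1-x) a) measurableSet_Ioi
        intro l hl; exact hpt2 l (le_of_lt hl)
      rw [mytail_val] at h1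
      have h2 : Real.exp (((1-x) - a)/3) ≤ 1 := by
        apply Real.exp_le_one_iff.mpr; linarith
      linarith
    have h3 : (3:ℝ) ≤ 3 * m ^ ((3:ℝ)/2) := by linarith
    linarith

noncomputable def myrho (t : ℝ) : ℝ := (max (-t) 1) ^ (-(1/4):ℝ) * Real.exp (min ((1-t)/6) 0)
noncomputable def mysig (t : ℝ) : ℝ := (max (-t) 1) ^ ((1/4):ℝ) * Real.exp (min ((1-t)/6) 0)

lemma max_pos' (t : ℝ) : (0:ℝ) < max (-t) 1 := lt_of_lt_of_le zero_lt_one (le_max_right _ _)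

lemma myrho_nonneg (t : ℝ) : 0 ≤ myrho t :=
  mul_nonneg (Real.rpow_nonneg (max_pos' t).le _) (Real.exp_pos _).le

lemma mysig_nonneg (t : ℝ) : 0 ≤ mysig t :=
  mul_nonneg (Real.rpow_nonneg (max_pos' t).le _) (Real.exp_pos _).le

lemma exp_min_sq (t : ℝ) : Real.exp (min ((1-t)/6) 0) ^ 2 = Real.exp (min ((1-t)/3) 0) := by
  rw [sq, ← Real.exp_add]
  congr 1
  rcases le_total (1-t) 0 with h | h
  · rw [min_eq_left (by linarith), min_eq_left (by linarith)]; ring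
  · rw [min_eq_right (by linarith), min_eq_right (by linarith)]; ring

lemma rpow_sq (a p : ℝ) (ha : 0 ≤ a) : (a ^ p) ^ 2 = a ^ (2 * p) := by
  rw [← Real.rpow_natCast (a ^ p) 2, ← Real.rpow_mul ha]
  congr 1
  push_cast
  ring

lemma myrho_sq (t : ℝ) : myrho t ^ 2 = mypsi (-(1/2)) t := by
  rw [myrho, mypsi, mul_pow, exp_min_sq, rpow_sq _ _ (max_pos' t).le]
  norm_num

lemma mysig_sq (t : ℝ) : mysig t ^ 2 = mypsi (1/2) t := by
  rw [mysig, mypsi, mul_pow, exp_min_sq, rpow_sq _ _ (max_pos' t).le]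
  norm_num

lemma mysig_anti : Antitone mysig := by
  intro t t' h
  apply mul_le_mul
  · exact Real.rpow_le_rpow (max_pos' t').le (max_le_max (neg_le_neg h) le_rfl) (by norm_num)
  · exact Real.exp_le_exp.mpr (min_le_min (by linarith [h]) le_rfl)
  · exact (Real.exp_pos _).le
  · exact Real.rpow_nonneg (max_pos' t).le _

lemma wamgm (a b w : ℝ) (hw : 0 < w) : a * b ≤ (w * a^2 + w⁻¹ * b^2)/2 := by
  have key : 2*w*(a*b) ≤ w*(w*a^2) + b^2 := by nlinarith [sq_nonneg (w*a - b)]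
  have h4 : 2*(a*b) ≤ w*a^2 + w⁻¹*b^2 := by
    have h5 := mul_le_mul_of_nonneg_left key (inv_nonneg.mpr hw.le)
    have e1 : w⁻¹ * (2*w*(a*b)) = 2*(a*b) := by field_simp
    have e2 : w⁻¹ * (w*(w*a^2) + b^2) = w*a^2 + w⁻¹*b^2 := by field_simp
    rw [e1, e2] at h5
    exact h5
  linarith

lemma airy_bound (c : ℝ) (f : ℝ → ℝ)
    (h1 : ∀ x : ℝ, 1 ≤ x → |f (-x)| ≤ c * x ^ (-(1:ℝ)/4))
    (h3 : ∀ x : ℝ, 1 ≤ x → |f x| ≤ c * x ^ (-(1:ℝ)/4) * Real.exp (-(2/3) * x ^ ((3:ℝ)/2)))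
    (h5 : ∀ x ∈ Icc (-1:ℝ) 1, |f x| ≤ c) :
    ∀ t, |f t| ≤ c * myrho t := by
  intro t
  have hc0 : 0 ≤ c := le_trans (abs_nonneg _) (h5 0 (by norm_num))
  rcases le_total t (-1) with ht | ht
  · have h1t : (1:ℝ) ≤ -t := by linarith
    have := h1 (-t) h1t
    rw [neg_neg] at this
    have hmax : max (-t) 1 = -t := max_eq_left h1t
    have hmin : min ((1-t)/6) 0 = 0 := min_eq_right (by linarith)
    rw [myrho, hmax, hmin, Real.exp_zero, mul_one]
    calc |f t| ≤ c * (-t) ^ (-(1:ℝ)/4) := this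
    _ = c * (-t) ^ (-(1/4):ℝ) := by norm_num
  · rcases le_total t 1 with ht2 | ht2
    · have hmax : max (-t) 1 = 1 := max_eq_right (by linarith)
      have hmin : min ((1-t)/6) 0 = 0 := min_eq_right (by linarith)
      rw [myrho, hmax, hmin, Real.exp_zero, Real.one_rpow, mul_one, mul_one]
      exact h5 t ⟨ht, ht2⟩
    · have := h3 t ht2
      have hmax : max (-t) 1 = 1 := max_eq_right (by linarith)
      have hmin : min ((1-t)/6) 0 = (1-t)/6 := min_eq_left (by linarith)
      rw [myrho, hmax, hmin, Real.one_rpow, one_mul]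
      have ht0 : (0:ℝ) < t := by linarith
      have e1 : t ^ (-(1:ℝ)/4) ≤ 1 :=
        Real.rpow_le_one_of_one_le_of_nonpos ht2 (by norm_num)
      have htt : t ≤ t ^ ((3:ℝ)/2) := by
        calc t = t ^ (1:ℝ) := (Real.rpow_one t).symm
        _ ≤ t ^ ((3:ℝ)/2) := Real.rpow_le_rpow_of_exponent_le ht2 (by norm_num)
      have e2 : Real.exp (-(2/3) * t ^ ((3:ℝ)/2)) ≤ Real.exp ((1-t)/6) := by
        apply Real.exp_le_exp.mpr
        nlinarith
      calc |f t| ≤ c * t ^ (-(1:ℝ)/4) * Real.exp (-(2/3) * t ^ ((3:ℝ)/2)) := this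
      _ ≤ c * 1 * Real.exp ((1-t)/6) := by
          apply mul_le_mul (mul_le_mul_of_nonneg_left e1 hc0) e2 (Real.exp_pos _).le
          positivity
      _ = c * Real.exp ((1-t)/6) := by ring

lemma airy'_bound (c : ℝ) (g : ℝ → ℝ) (hc0 : 0 ≤ c)
    (h2 : ∀ x : ℝ, 1 ≤ x → |g (-x)| ≤ c * x ^ ((1:ℝ)/4))
    (h4 : ∀ x : ℝ, 1 ≤ x → |g x| ≤ c * x ^ ((1:ℝ)/4) * Real.exp (-(2/3) * x ^ ((3:ℝ)/2)))
    (h5 : ∀ x ∈ Icc (-1:ℝ) 1, |g x| ≤ c) :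
    ∀ t, |g t| ≤ c * mysig t := by
  intro t
  rcases le_total t (-1) with ht | ht
  · have h1t : (1:ℝ) ≤ -t := by linarith
    have := h2 (-t) h1t
    rw [neg_neg] at this
    have hmax : max (-t) 1 = -t := max_eq_left h1t
    have hmin : min ((1-t)/6) 0 = 0 := min_eq_right (by linarith)
    rw [mysig, hmax, hmin, Real.exp_zero, mul_one]
    exact this
  · rcases le_total t 1 with ht2 | ht2
    · have hmax : max (-t) 1 = 1 := max_eq_right (by linarith)
      have hmin : min ((1-t)/6) 0 = 0 := min_eq_right (by linarith)
      rw [mysig, hmax, hmin, Real.exp_zero, Real.one_rpow, mul_one, mul_one]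
      exact h5 t ⟨ht, ht2⟩
    · have := h4 t ht2
      have hmax : max (-t) 1 = 1 := max_eq_right (by linarith)
      have hmin : min ((1-t)/6) 0 = (1-t)/6 := min_eq_left (by linarith)
      rw [mysig, hmax, hmin, Real.one_rpow, one_mul]
      have ht0 : (0:ℝ) < t := by linarith
      have e1 : t ^ ((1:ℝ)/4) ≤ t := by
        calc t ^ ((1:ℝ)/4) ≤ t ^ (1:ℝ) := Real.rpow_le_rpow_of_exponent_le ht2 (by norm_num)
        _ = t := Real.rpow_one t
      have e2 : t ≤ Real.exp (t/2) := by
        have q1 : 1 + t/4 ≤ Real.exp (t/4) := by linarith [Real.add_one_le_exp (t/4)]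
        have q2 : Real.exp (t/4) * Real.exp (t/4) = Real.exp (t/2) := by
          rw [← Real.exp_add]; ring_nf
        nlinarith [sq_nonneg (1 - t/4), Real.exp_pos (t/4)]
      have htt : t ≤ t ^ ((3:ℝ)/2) := by
        calc t = t ^ (1:ℝ) := (Real.rpow_one t).symm
        _ ≤ t ^ ((3:ℝ)/2) := Real.rpow_le_rpow_of_exponent_le ht2 (by norm_num)
      have e3 : t ^ ((1:ℝ)/4) * Real.exp (-(2/3) * t ^ ((3:ℝ)/2)) ≤ Real.exp ((1-t)/6) := by
        calc t ^ ((1:ℝ)/4) * Real.exp (-(2/3) * t ^ ((3:ℝ)/2))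
            ≤ Real.exp (t/2) * Real.exp (-(2/3) * t ^ ((3:ℝ)/2)) := by
              apply mul_le_mul_of_nonneg_right (e1.trans e2) (Real.exp_pos _).le
        _ = Real.exp (t/2 + -(2/3) * t ^ ((3:ℝ)/2)) := (Real.exp_add _ _).symm
        _ ≤ Real.exp ((1-t)/6) := by
              apply Real.exp_le_exp.mpr
              nlinarith
      calc |g t| ≤ c * t ^ ((1:ℝ)/4) * Real.exp (-(2/3) * t ^ ((3:ℝ)/2)) := this
      _ = c * (t ^ ((1:ℝ)/4) * Real.exp (-(2/3) * t ^ ((3:ℝ)/2))) := by ring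
      _ ≤ c * Real.exp ((1-t)/6) := mul_le_mul_of_nonneg_left e3 hc0

lemma key_est (u v w c : ℝ) (hw : 0 < w) (hc : 0 ≤ c) (f g F G : ℝ → ℝ)
    (hfc : Continuous f) (hgc : Continuous g)
    (hFb : ∀ t, |f t| ≤ c * F t) (hGb : ∀ t, |g t| ≤ c * G t)
    (hFn : ∀ t, 0 ≤ F t) (hGn : ∀ t, 0 ≤ G t)
    (IF : IntegrableOn (fun l => F (u+l)^2) (Ioi 0) volume)
    (IG : IntegrableOn (fun l => G (v+l)^2) (Ioi 0) volume) :
    IntegrableOn (fun l => f (u+l) * g (v+l)) (Ioi 0) volume ∧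
    |∫ l in Ioi 0, f (u+l) * g (v+l)| ≤
      c^2/2 * (w * ∫ l in Ioi 0, F (u+l)^2) +
      c^2/2 * (w⁻¹ * ∫ l in Ioi 0, G (v+l)^2) := by
  set bound : ℝ → ℝ := fun l => c^2/2 * (w * F (u+l)^2) + c^2/2 * (w⁻¹ * G (v+l)^2) with hbdef
  have hb : ∀ l, |f (u+l) * g (v+l)| ≤ bound l := by
    intro l
    have e1 : |f (u+l) * g (v+l)| = |f (u+l)| * |g (v+l)| := abs_mul _ _
    have e2 : |f (u+l)| * |g (v+l)| ≤ (c * F (u+l)) * (c * G (v+l)) :=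
      mul_le_mul (hFb _) (hGb _) (abs_nonneg _) (mul_nonneg hc (hFn _))
    have e3 : (c * F (u+l)) * (c * G (v+l)) = c^2 * (F (u+l) * G (v+l)) := by ring
    have e4 : F (u+l) * G (v+l) ≤ (w * F (u+l)^2 + w⁻¹ * G (v+l)^2)/2 :=
      wamgm _ _ w hw
    have e5 : c^2 * (F (u+l) * G (v+l)) ≤ c^2 * ((w * F (u+l)^2 + w⁻¹ * G (v+l)^2)/2) :=
      mul_le_mul_of_nonneg_left e4 (sq_nonneg c)
    calc |f (u+l) * g (v+l)| = |f (u+l)| * |g (v+l)| := e1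
    _ ≤ (c * F (u+l)) * (c * G (v+l)) := e2
    _ ≤ c^2 * ((w * F (u+l)^2 + w⁻¹ * G (v+l)^2)/2) := by rw [e3]; exact e5
    _ = bound l := by rw [hbdef]; ring
  have Ibound : IntegrableOn bound (Ioi 0) volume :=
    ((IF.const_mul w).const_mul (c^2/2)).add ((IG.const_mul w⁻¹).const_mul (c^2/2))
  have hmeas : AEStronglyMeasurable (fun l => f (u+l) * g (v+l)) (volume.restrict (Ioi 0)) :=
    ((hfc.comp (continuous_const.add continuous_id)).mul
      (hgc.comp (continuous_const.add continuous_id))).aestronglyMeasurable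
  have hint : IntegrableOn (fun l => f (u+l) * g (v+l)) (Ioi 0) volume := by
    apply Ibound.mono' hmeas
    filter_upwards with l
    rw [Real.norm_eq_abs]
    exact hb l
  refine ⟨hint, ?_⟩
  have h1 : ‖∫ l in Ioi 0, f (u+l) * g (v+l)‖ ≤ ∫ l in Ioi 0, bound l :=
    norm_integral_le_of_norm_le Ibound (by filter_upwards with l; rw [Real.norm_eq_abs]; exact hb l)
  rw [Real.norm_eq_abs] at h1
  have h2 : ∫ l in Ioi 0, bound l =
      c^2/2 * (w * ∫ l in Ioi 0, F (u+l)^2) + c^2/2 * (w⁻¹ * ∫ l in Ioi 0, G (v+l)^2) := by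
    rw [hbdef, integral_add (((IF.const_mul w).const_mul (c^2/2))) (((IG.const_mul w⁻¹).const_mul (c^2/2)))]
    rw [integral_const_mul, integral_const_mul, integral_const_mul, integral_const_mul]
  rw [h2] at h1
  exact h1

lemma rho_sq_int (X : ℝ) : IntegrableOn (fun l => myrho (X+l)^2) (Ioi 0) volume ∧
    ∫ l in Ioi 0, myrho (X+l)^2 ≤ 11 * (max (-X) 1) ^ ((1:ℝ)/2) := by
  have he : (fun l => myrho (X+l)^2) = fun l => mypsi (-(1/2)) (X+l) :=
    funext fun l => myrho_sq _
  rw [he]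
  exact master_neg X

lemma sig_sq_int (X : ℝ) : IntegrableOn (fun l => mysig (X+l)^2) (Ioi 0) volume ∧
    ∫ l in Ioi 0, mysig (X+l)^2 ≤ 11 * (max (-X) 1) ^ ((3:ℝ)/2) := by
  have he : (fun l => mysig (X+l)^2) = fun l => mypsi (1/2) (X+l) :=
    funext fun l => mysig_sq _
  rw [he]
  exact master_pos X

set_option maxHeartbeats 1000000 in
lemma D_param (X Y c : ℝ) (hc : 0 ≤ c) (f g Gb : ℝ → ℝ)
    (hf : Differentiable ℝ f) (hgc : Continuous g) (hf'c : Continuous (deriv f))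
    (hf'b : ∀ t, |deriv f t| ≤ c * mysig t)
    (hgb : ∀ t, |g t| ≤ c * Gb t) (hGn : ∀ t, 0 ≤ Gb t)
    (hFint : Integrable (fun l => f (X+l) * g (Y+l)) (volume.restrict (Ioi 0)))
    (IGsq : IntegrableOn (fun l => Gb (Y+l)^2) (Ioi 0) volume) :
    HasDerivAt (fun x' => ∫ l in Ioi 0, f (x'+l) * g (Y+l))
      (∫ l in Ioi 0, deriv f (X+l) * g (Y+l)) X := by
  have Isig : IntegrableOn (fun l => mysig ((X-1)+l)^2) (Ioi 0) volume := (sig_sq_int (X-1)).1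
  set bound : ℝ → ℝ := fun l => c^2 * ((mysig ((X-1)+l)^2 + Gb (Y+l)^2)/2) with hbdef
  have bint : Integrable bound (volume.restrict (Ioi 0)) := by
    have : Integrable (fun l => mysig ((X-1)+l)^2 + Gb (Y+l)^2) (volume.restrict (Ioi 0)) :=
      Isig.add IGsq
    simpa [hbdef, mul_div_assoc] using (this.div_const 2).const_mul (c^2)
  have hmeas : ∀ᶠ x' in nhds X, AEStronglyMeasurable (fun l => f (x'+l) * g (Y+l))
      (volume.restrict (Ioi 0)) := by
    filter_upwards with x'
    exact ((hf.continuous.comp (continuous_const.add continuous_id)).mul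
      (hgc.comp (continuous_const.add continuous_id))).aestronglyMeasurable
  have h'meas : AEStronglyMeasurable (fun l => deriv f (X+l) * g (Y+l))
      (volume.restrict (Ioi 0)) :=
    ((hf'c.comp (continuous_const.add continuous_id)).mul
      (hgc.comp (continuous_const.add continuous_id))).aestronglyMeasurable
  have hbound : ∀ᵐ l ∂(volume.restrict (Ioi 0)), ∀ x' ∈ Metric.ball X 1,
      ‖deriv f (x'+l) * g (Y+l)‖ ≤ bound l := by
    filter_upwards with l
    intro x' hx'
    have hx1 : X - 1 ≤ x' := by
      have h' := Metric.mem_ball.mp hx'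
      rw [Real.dist_eq] at h'
      have := abs_lt.mp h'
      linarith [this.1]
    have e1 : mysig (x'+l) ≤ mysig ((X-1)+l) := mysig_anti (by linarith)
    have e2 : |deriv f (x'+l)| ≤ c * mysig ((X-1)+l) :=
      le_trans (hf'b _) (mul_le_mul_of_nonneg_left e1 hc)
    have e3 : ‖deriv f (x'+l) * g (Y+l)‖ ≤ (c * mysig ((X-1)+l)) * (c * Gb (Y+l)) := by
      rw [Real.norm_eq_abs, abs_mul]
      exact mul_le_mul e2 (hgb _) (abs_nonneg _) (mul_nonneg hc (mysig_nonneg _))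
    have e4 : mysig ((X-1)+l) * Gb (Y+l) ≤ (mysig ((X-1)+l)^2 + Gb (Y+l)^2)/2 := by
      nlinarith [sq_nonneg (mysig ((X-1)+l) - Gb (Y+l))]
    calc ‖deriv f (x'+l) * g (Y+l)‖ ≤ (c * mysig ((X-1)+l)) * (c * Gb (Y+l)) := e3
    _ = c^2 * (mysig ((X-1)+l) * Gb (Y+l)) := by ring
    _ ≤ bound l := by
        rw [hbdef]
        exact mul_le_mul_of_nonneg_left e4 (sq_nonneg c)
  have hdiffF : ∀ᵐ l ∂(volume.restrict (Ioi 0)), ∀ x' ∈ Metric.ball X 1,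
      HasDerivAt (fun x'' => f (x''+l) * g (Y+l)) (deriv f (x'+l) * g (Y+l)) x' := by
    filter_upwards with l
    intro x' _
    have hid : HasDerivAt (fun x'' : ℝ => x'' + l) 1 x' := (hasDerivAt_id x').add_const l
    have hcomp := ((hf (x'+l)).hasDerivAt).comp x' hid
    have := hcomp.mul_const (g (Y+l))
    simpa using this
  exact (hasDerivAt_integral_of_dominated_loc_of_deriv_le (Metric.ball_mem_nhds X one_pos) hmeas hFint h'meas
    hbound bint hdiffF).2

set_option maxHeartbeats 2000000

/-- Bounds on the Airy kernel `K(x,y) = ∫₀^∞ Ai(x+λ) Ai(y+λ) dλ` and its derivatives,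
assuming the standard asymptotic bounds on the Airy function `Ai` and its derivative:
there is `c'` > 0 such that, with `m = c' max(-x, -y, 1)`,
`|K(x,y)| ≤ m^{1/2}`, `|∂ₓK(x,y)| ≤ m`, and `|∂ₓ∂_yK(x,y)| ≤ m^{3/2}`. -/
theorem stmt18 (Ai : ℝ → ℝ) (hdiff : Differentiable ℝ Ai)
    (hderiv : Differentiable ℝ (deriv Ai)) (c : ℝ) (hc : 0 < c)
    (h1 : ∀ x : ℝ, 1 ≤ x → |Ai (-x)| ≤ c * x ^ (-(1:ℝ)/4))
    (h2 : ∀ x : ℝ, 1 ≤ x → |deriv Ai (-x)| ≤ c * x ^ ((1:ℝ)/4))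
    (h3 : ∀ x : ℝ, 1 ≤ x → |Ai x| ≤ c * x ^ (-(1:ℝ)/4) * Real.exp (-(2/3) * x ^ ((3:ℝ)/2)))
    (h4 : ∀ x : ℝ, 1 ≤ x → |deriv Ai x| ≤ c * x ^ ((1:ℝ)/4) * Real.exp (-(2/3) * x ^ ((3:ℝ)/2)))
    (h5 : ∀ x ∈ Set.Icc (-1:ℝ) 1, |Ai x| ≤ c ∧ |deriv Ai x| ≤ c)
    (K : ℝ → ℝ → ℝ)
    (hK : ∀ x y : ℝ, K x y = ∫ lam in Set.Ioi (0:ℝ), Ai (x + lam) * Ai (y + lam)) :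
    ∃ c' > (0:ℝ), ∀ x y : ℝ,
      |K x y| ≤ (c' * max (max (-x) (-y)) 1) ^ ((1:ℝ)/2) ∧
      |deriv (fun x' => K x' y) x| ≤ c' * max (max (-x) (-y)) 1 ∧
      |deriv (fun y' => deriv (fun x' => K x' y') x) y| ≤
        (c' * max (max (-x) (-y)) 1) ^ ((3:ℝ)/2) := by
  have hAi : ∀ t, |Ai t| ≤ c * myrho t := airy_bound c Ai h1 h3 (fun z hz => (h5 z hz).1)
  have hAi' : ∀ t, |deriv Ai t| ≤ c * mysig t :=
    airy'_bound c (deriv Ai) hc.le h2 h4 (fun z hz => (h5 z hz).2)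
  set N : ℝ := 11*c^2 + 11 with hNdef
  have hN1 : 1 ≤ N := by nlinarith
  have hN0 : 0 < N := by linarith
  refine ⟨N^2, by positivity, ?_⟩
  intro x y
  set m : ℝ := max (max (-x) (-y)) 1 with hmdef
  have hm1 : (1:ℝ) ≤ m := le_max_right _ _
  have hm0 : (0:ℝ) < m := by linarith
  have hmx : max (-x) 1 ≤ m := max_le (le_trans (le_max_left (-x) (-y)) (le_max_left _ 1)) hm1
  have hmy : max (-y) 1 ≤ m := max_le (le_trans (le_max_right (-x) (-y)) (le_max_left _ 1)) hm1
  set M12 : ℝ := m ^ ((1:ℝ)/2) with hM12def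
  set M32 : ℝ := m ^ ((3:ℝ)/2) with hM32def
  have hM12_1 : 1 ≤ M12 := one_le_rpow' hm1 (by norm_num)
  have hM12_0 : 0 < M12 := by linarith
  have hM32_1 : 1 ≤ M32 := one_le_rpow' hm1 (by norm_num)
  have hMsq : M12 * M12 = m := by
    rw [hM12def, ← Real.rpow_add hm0]; norm_num
  have hM32eq : M32 = m * M12 := by
    rw [hM32def, hM12def, show (3:ℝ)/2 = 1 + 1/2 by norm_num, Real.rpow_add hm0, Real.rpow_one]
  -- rpow monotonicity transfers
  have hmx12 : (max (-x) 1) ^ ((1:ℝ)/2) ≤ M12 := Real.rpow_le_rpow (max_pos' x).le hmx (by norm_num)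
  have hmy12 : (max (-y) 1) ^ ((1:ℝ)/2) ≤ M12 := Real.rpow_le_rpow (max_pos' y).le hmy (by norm_num)
  have hmx32 : (max (-x) 1) ^ ((3:ℝ)/2) ≤ M32 := Real.rpow_le_rpow (max_pos' x).le hmx (by norm_num)
  have hmy32 : (max (-y) 1) ^ ((3:ℝ)/2) ≤ M32 := Real.rpow_le_rpow (max_pos' y).le hmy (by norm_num)
  obtain ⟨IRx, ERx⟩ := rho_sq_int x
  obtain ⟨IRy, ERy⟩ := rho_sq_int y
  obtain ⟨ISx, ESx⟩ := sig_sq_int x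
  obtain ⟨ISy, ESy⟩ := sig_sq_int y
  have qRx : ∫ l in Ioi 0, myrho (x+l)^2 ≤ 11 * M12 := le_trans ERx (by nlinarith)
  have qRy : ∫ l in Ioi 0, myrho (y+l)^2 ≤ 11 * M12 := le_trans ERy (by nlinarith)
  have qSx : ∫ l in Ioi 0, mysig (x+l)^2 ≤ 11 * M32 := le_trans ESx (by nlinarith)
  have qSy : ∫ l in Ioi 0, mysig (y+l)^2 ≤ 11 * M32 := le_trans ESy (by nlinarith)
  have iRx : 0 ≤ ∫ l in Ioi 0, myrho (x+l)^2 := integral_nonneg (fun l => sq_nonneg _)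
  have iRy : 0 ≤ ∫ l in Ioi 0, myrho (y+l)^2 := integral_nonneg (fun l => sq_nonneg _)
  have iSx : 0 ≤ ∫ l in Ioi 0, mysig (x+l)^2 := integral_nonneg (fun l => sq_nonneg _)
  have iSy : 0 ≤ ∫ l in Ioi 0, mysig (y+l)^2 := integral_nonneg (fun l => sq_nonneg _)
  -- rpow algebra for N
  have hNsq12 : ((N^2 * m)) ^ ((1:ℝ)/2) = N * M12 := by
    rw [Real.mul_rpow (by positivity) hm0.le, ← Real.rpow_natCast N 2, ← Real.rpow_mul hN0.le]
    norm_num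
    exact Or.inl rfl
  have hNsq32 : ((N^2 * m)) ^ ((3:ℝ)/2) = N^3 * M32 := by
    rw [Real.mul_rpow (by positivity) hm0.le, ← Real.rpow_natCast N 2, ← Real.rpow_mul hN0.le]
    norm_num
    exact Or.inl rfl
  refine ⟨?_, ?_, ?_⟩
  -- Bound 1
  · obtain ⟨_, Kbd⟩ := key_est x y 1 c one_pos hc.le Ai Ai myrho myrho hdiff.continuous
      hdiff.continuous hAi hAi myrho_nonneg myrho_nonneg IRx IRy
    rw [hK x y]
    rw [hNsq12]
    simp only [one_mul, inv_one] at Kbd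
    calc |∫ l in Ioi 0, Ai (x+l) * Ai (y+l)| ≤
        c^2/2 * (∫ l in Ioi 0, myrho (x+l)^2) + c^2/2 * (∫ l in Ioi 0, myrho (y+l)^2) := by
          simpa using Kbd
    _ ≤ c^2/2 * (11 * M12) + c^2/2 * (11 * M12) := by
          have e1 := mul_le_mul_of_nonneg_left qRx (by positivity : (0:ℝ) ≤ c^2/2)
          have e2 := mul_le_mul_of_nonneg_left qRy (by positivity : (0:ℝ) ≤ c^2/2)
          linarith
    _ = 11 * c^2 * M12 := by ring
    _ ≤ N * M12 := by
        have h9 : 11 * c^2 ≤ N := by nlinarith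
        exact mul_le_mul_of_nonneg_right h9 (by linarith)
  -- Bound 2
  · have hKfun : (fun x' => K x' y) = fun x' => ∫ l in Ioi 0, Ai (x'+l) * Ai (y+l) :=
      funext fun x' => hK x' y
    have hFint : Integrable (fun l => Ai (x+l) * Ai (y+l)) (volume.restrict (Ioi 0)) :=
      (key_est x y 1 c one_pos hc.le Ai Ai myrho myrho hdiff.continuous hdiff.continuous
        hAi hAi myrho_nonneg myrho_nonneg IRx IRy).1
    have hD1 : HasDerivAt (fun x' => ∫ l in Ioi 0, Ai (x'+l) * Ai (y+l))
        (∫ l in Ioi 0, deriv Ai (x+l) * Ai (y+l)) x :=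
      D_param x y c hc.le Ai Ai myrho hdiff hdiff.continuous hderiv.continuous hAi' hAi
        myrho_nonneg hFint IRy
    have hder : deriv (fun x' => K x' y) x = ∫ l in Ioi 0, deriv Ai (x+l) * Ai (y+l) := by
      rw [hKfun]; exact hD1.deriv
    rw [hder]
    obtain ⟨_, Dbd⟩ := key_est x y M12⁻¹ c (by positivity) hc.le (deriv Ai) Ai mysig myrho
      hderiv.continuous hdiff.continuous hAi' hAi mysig_nonneg myrho_nonneg ISx IRy
    rw [inv_inv] at Dbd
    have e1 : M12⁻¹ * ∫ l in Ioi 0, mysig (x+l)^2 ≤ M12⁻¹ * (11 * M32) :=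
      mul_le_mul_of_nonneg_left qSx (by positivity)
    have e2 : M12 * ∫ l in Ioi 0, myrho (y+l)^2 ≤ M12 * (11 * M12) :=
      mul_le_mul_of_nonneg_left qRy (by positivity)
    have e3 : M12⁻¹ * (11 * M32) = 11 * m := by
      rw [hM32eq]; field_simp
    have e4 : M12 * (11 * M12) = 11 * m := by rw [← hMsq]; ring
    calc |∫ l in Ioi 0, deriv Ai (x+l) * Ai (y+l)| ≤
        c^2/2 * (M12⁻¹ * ∫ l in Ioi 0, mysig (x+l)^2) +
        c^2/2 * (M12 * ∫ l in Ioi 0, myrho (y+l)^2) := Dbd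
    _ ≤ c^2/2 * (11 * m) + c^2/2 * (11 * m) := by
        have f1 := mul_le_mul_of_nonneg_left (e1.trans_eq e3) (by positivity : (0:ℝ) ≤ c^2/2)
        have f2 := mul_le_mul_of_nonneg_left (e2.trans_eq e4) (by positivity : (0:ℝ) ≤ c^2/2)
        linarith
    _ = 11 * c^2 * m := by ring
    _ ≤ N^2 * m := by
        have h9 : 11 * c^2 ≤ N^2 := by nlinarith
        exact mul_le_mul_of_nonneg_right h9 hm0.le
  -- Bound 3
  · have hder1 : ∀ Y : ℝ, deriv (fun x' => K x' Y) x = ∫ l in Ioi 0, deriv Ai (x+l) * Ai (Y+l) := by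
      intro Y
      have hKfun : (fun x' => K x' Y) = fun x' => ∫ l in Ioi 0, Ai (x'+l) * Ai (Y+l) :=
        funext fun x' => hK x' Y
      have hFint : Integrable (fun l => Ai (x+l) * Ai (Y+l)) (volume.restrict (Ioi 0)) :=
        (key_est x Y 1 c one_pos hc.le Ai Ai myrho myrho hdiff.continuous hdiff.continuous
          hAi hAi myrho_nonneg myrho_nonneg IRx (rho_sq_int Y).1).1
      have hD1 : HasDerivAt (fun x' => ∫ l in Ioi 0, Ai (x'+l) * Ai (Y+l))
          (∫ l in Ioi 0, deriv Ai (x+l) * Ai (Y+l)) x :=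
        D_param x Y c hc.le Ai Ai myrho hdiff hdiff.continuous hderiv.continuous hAi' hAi
          myrho_nonneg hFint (rho_sq_int Y).1
      rw [hKfun]; exact hD1.deriv
    have hfun2 : (fun y' => deriv (fun x' => K x' y') x) =
        fun y' => ∫ l in Ioi 0, Ai (y'+l) * deriv Ai (x+l) := by
      funext y'
      rw [hder1 y']
      exact integral_congr_ae (Filter.Eventually.of_forall fun l => mul_comm _ _)
    have hFint2 : Integrable (fun l => Ai (y+l) * deriv Ai (x+l)) (volume.restrict (Ioi 0)) :=
      (key_est y x 1 c one_pos hc.le Ai (deriv Ai) myrho mysig hdiff.continuous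
        hderiv.continuous hAi hAi' myrho_nonneg mysig_nonneg IRy ISx).1
    have hD2 : HasDerivAt (fun y' => ∫ l in Ioi 0, Ai (y'+l) * deriv Ai (x+l))
        (∫ l in Ioi 0, deriv Ai (y+l) * deriv Ai (x+l)) y :=
      D_param y x c hc.le Ai (deriv Ai) mysig hdiff hderiv.continuous hderiv.continuous hAi' hAi'
        mysig_nonneg hFint2 ISx
    have hder2 : deriv (fun y' => deriv (fun x' => K x' y') x) y =
        ∫ l in Ioi 0, deriv Ai (y+l) * deriv Ai (x+l) := by
      rw [hfun2]; exact hD2.deriv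
    rw [hder2, hNsq32]
    obtain ⟨_, Dbd⟩ := key_est y x 1 c one_pos hc.le (deriv Ai) (deriv Ai) mysig mysig
      hderiv.continuous hderiv.continuous hAi' hAi' mysig_nonneg mysig_nonneg ISy ISx
    simp only [one_mul, inv_one] at Dbd
    calc |∫ l in Ioi 0, deriv Ai (y+l) * deriv Ai (x+l)| ≤
        c^2/2 * (∫ l in Ioi 0, mysig (y+l)^2) + c^2/2 * (∫ l in Ioi 0, mysig (x+l)^2) := by
          simpa using Dbd
    _ ≤ c^2/2 * (11 * M32) + c^2/2 * (11 * M32) := by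
        have e1 := mul_le_mul_of_nonneg_left qSy (by positivity : (0:ℝ) ≤ c^2/2)
        have e2 := mul_le_mul_of_nonneg_left qSx (by positivity : (0:ℝ) ≤ c^2/2)
        linarith
    _ = 11 * c^2 * M32 := by ring
    _ ≤ N^3 * M32 := by
        have h8 : N ≤ N^3 := by nlinarith [mul_nonneg (mul_nonneg hN0.le (sub_nonneg.mpr hN1)) (by linarith : (0:ℝ) ≤ N+1)]
        have h9 : 11 * c^2 ≤ N^3 := by nlinarith
        exact mul_le_mul_of_nonneg_right h9 (by linarith)
end
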